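/- arXiv:2202.03145 — 2 statements merged into one kernel-verified Lean document; each statement's English description precedes it below -/
import Mathlib

section
/- Let I ⊆ ℝ be an interval containing 0, let x₁, …, xₙ ∈ I with x₁ ≤ x₂ ≤ … ≤ xₙ, and let w₁, …, wₙ be positive weights with ∑_{k=1}^n w_k = 1. If φ is an m-convex function on I with m ∈ (0,1], then φ(m x₁ + m² xₙ − m² ∑_{k=1}^n w_k x_k) ≤ m φ(x₁) + m² φ(xₙ) − m ∑_{k=1}^n w_k φ(m x_k). -/
/-!
Write every `xₖ` as `tₖ x₀ + (1 - tₖ) xₙ` with `tₖ ∈ [0, 1]`, and let `T = ∑ wₖ tₖ`, so that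
`∑ wₖ xₖ = T x₀ + (1 - T) xₙ`. Since `0 ∈ I`, also `m x₀ ∈ I`, and `m`-convexity with `y = x`,
`t = 0` gives `φ (m x) ≤ m φ x`. Applying `m`-convexity to the pair `(m x₀, xₙ)` bounds each
`φ (m xₖ)` by `m (tₖ φ x₀ + (1 - tₖ) φ xₙ)`, hence `∑ wₖ φ (m xₖ) ≤ m (T φ x₀ + (1 - T) φ xₙ)`.
The argument on the left is `(1 - m T) (m x₀) + m (m T) xₙ`, and one more application of
`m`-convexity to the same pair gives exactly the right-hand side with that bound substituted.
-/

open Set Finset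

def MConvexOn (m : ℝ) (s : Set ℝ) (f : ℝ → ℝ) : Prop :=
  ∀ x ∈ s, ∀ y ∈ s, ∀ t ∈ Icc (0 : ℝ) 1, f (t * x + m * (1 - t) * y) ≤ t * f x + m * (1 - t) * f y

lemma exists_mem_Icc_eq_combo {a b z : ℝ} (hz : z ∈ Icc a b) :
    ∃ t ∈ Icc (0 : ℝ) 1, z = t * a + (1 - t) * b := by
  rw [← segment_eq_Icc (hz.1.trans hz.2)] at hz
  obtain ⟨t, u, ht, hu, htu, rfl⟩ := hz
  refine ⟨t, ⟨ht, by linarith⟩, ?_⟩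
  rw [← htu]
  simp only [smul_eq_mul, add_sub_cancel_left]

lemma Finset.sum_mul_combo {ι : Type*} (s : Finset ι) {w : ι → ℝ} (hw : ∑ i ∈ s, w i = 1)
    (t : ι → ℝ) (u v : ℝ) :
    ∑ i ∈ s, w i * (t i * u + (1 - t i) * v)
      = (∑ i ∈ s, w i * t i) * u + (1 - ∑ i ∈ s, w i * t i) * v := by
  simp only [mul_add, mul_sub, ← mul_assoc, mul_one, sum_add_distrib, ← sum_mul, sum_sub_distrib,
    hw]

namespace MConvexOn

variable {m : ℝ} {s : Set ℝ} {f : ℝ → ℝ}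

lemma map_mul_le (hf : MConvexOn m s f) {x : ℝ} (hx : x ∈ s) : f (m * x) ≤ m * f x := by
  simpa using hf x hx x hx 0 (left_mem_Icc.2 zero_le_one)

lemma map_mul_combo_le (hf : MConvexOn m s f) {a b t : ℝ} (ha : a ∈ s) (hma : m * a ∈ s)
    (hb : b ∈ s) (ht : t ∈ Icc (0 : ℝ) 1) :
    f (m * (t * a + (1 - t) * b)) ≤ m * (t * f a + (1 - t) * f b) := by
  have key := hf (m * a) hma b hb t ht
  have hfa := mul_le_mul_of_nonneg_left (hf.map_mul_le ha) ht.1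
  calc f (m * (t * a + (1 - t) * b)) = f (t * (m * a) + m * (1 - t) * b) := by congr 1; ring
    _ ≤ m * (t * f a + (1 - t) * f b) := by linarith

lemma sum_map_mul_combo_le (hf : MConvexOn m s f) {ι : Type*} {u : Finset ι} {w t : ι → ℝ}
    {a b : ℝ} (ha : a ∈ s) (hma : m * a ∈ s) (hb : b ∈ s)
    (hw : ∀ i ∈ u, 0 ≤ w i) (hw1 : ∑ i ∈ u, w i = 1) (ht : ∀ i ∈ u, t i ∈ Icc (0 : ℝ) 1) :
    ∑ i ∈ u, w i * f (m * (t i * a + (1 - t i) * b))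
      ≤ m * ((∑ i ∈ u, w i * t i) * f a + (1 - ∑ i ∈ u, w i * t i) * f b) := by
  calc ∑ i ∈ u, w i * f (m * (t i * a + (1 - t i) * b))
      ≤ ∑ i ∈ u, w i * (m * (t i * f a + (1 - t i) * f b)) :=
        sum_le_sum fun i hi => mul_le_mul_of_nonneg_left
          (hf.map_mul_combo_le ha hma hb (ht i hi)) (hw i hi)
    _ = m * ∑ i ∈ u, w i * (t i * f a + (1 - t i) * f b) := by
        rw [mul_sum]; exact sum_congr rfl fun i _ => by ring
    _ = _ := by rw [u.sum_mul_combo hw1]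

lemma map_jensenMercer_le (hf : MConvexOn m s f) {a b T : ℝ} (ha : a ∈ s) (hma : m * a ∈ s)
    (hb : b ∈ s) (hm : m ∈ Icc (0 : ℝ) 1) (hT : T ∈ Icc (0 : ℝ) 1) :
    f (m * a + m ^ 2 * b - m ^ 2 * (T * a + (1 - T) * b))
      ≤ m * f a + m ^ 2 * f b - m * (m * (T * f a + (1 - T) * f b)) := by
  have hmT : 1 - m * T ∈ Icc (0 : ℝ) 1 :=
    ⟨by nlinarith [hm.1, hm.2, hT.1, hT.2], by nlinarith [hm.1, hT.1]⟩
  have key := hf (m * a) hma b hb (1 - m * T) hmT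
  have hfa := mul_le_mul_of_nonneg_left (hf.map_mul_le ha) hmT.1
  calc f (m * a + m ^ 2 * b - m ^ 2 * (T * a + (1 - T) * b))
      = f ((1 - m * T) * (m * a) + m * (1 - (1 - m * T)) * b) := by congr 1; ring
    _ ≤ m * f a + m ^ 2 * f b - m * (m * (T * f a + (1 - T) * f b)) := by linarith

end MConvexOn

/-- Jensen–Mercer-type inequality for m-convex functions: if `I` is an interval
containing `0`, `x₀ ≤ x₁ ≤ ⋯ ≤ xₙ` are points of `I`, the weights `wₖ` are positive and
sum to `1`, and `φ` is `m`-convex on `I` with `m ∈ (0,1]`, then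
`φ(m x₀ + m² xₙ − m² ∑ wₖ xₖ) ≤ m φ(x₀) + m² φ(xₙ) − m ∑ wₖ φ(m xₖ)`. -/
theorem jensen_mercer_mconvex_discrete
    (I : Set ℝ) (hI : I.OrdConnected) (h0 : (0 : ℝ) ∈ I)
    (n : ℕ) (x : Fin (n + 1) → ℝ) (hx : ∀ k, x k ∈ I) (hmono : Monotone x)
    (w : Fin (n + 1) → ℝ) (hw : ∀ k, 0 < w k) (hw1 : ∑ k, w k = 1)
    (m : ℝ) (hm : m ∈ Set.Ioc (0 : ℝ) 1)
    (φ : ℝ → ℝ)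
    (hφ : ∀ x ∈ I, ∀ y ∈ I, ∀ t ∈ Set.Icc (0 : ℝ) 1,
      φ (t * x + m * (1 - t) * y) ≤ t * φ x + m * (1 - t) * φ y) :
    φ (m * x 0 + m ^ 2 * x (Fin.last n) - m ^ 2 * ∑ k, w k * x k)
      ≤ m * φ (x 0) + m ^ 2 * φ (x (Fin.last n)) - m * ∑ k, w k * φ (m * x k) := by
  have hconv : MConvexOn m I φ := hφ
  have hm' : m ∈ Icc (0 : ℝ) 1 := Ioc_subset_Icc_self hm
  have hw' : ∀ k ∈ Finset.univ, 0 ≤ w k := fun k _ => (hw k).le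
  have hma : m * x 0 ∈ I := hI.convex.smul_mem_of_zero_mem h0 (hx 0) hm'
  choose t ht hxt using fun k =>
    exists_mem_Icc_eq_combo ⟨hmono (Fin.zero_le k), hmono (Fin.le_last k)⟩
  set T := ∑ k, w k * t k
  have hT : T ∈ Icc (0 : ℝ) 1 := (convex_Icc 0 1).sum_mem hw' hw1 fun k _ => ht k
  have hmean : ∑ k, w k * x k = T * x 0 + (1 - T) * x (Fin.last n) :=
    (sum_congr rfl fun k _ => congrArg (w k * ·) (hxt k)).trans (univ.sum_mul_combo hw1 ..)
  have hsum := hconv.sum_map_mul_combo_le (hx 0) hma (hx (Fin.last n)) hw' hw1 fun k _ => ht k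
  simp only [← hxt] at hsum
  calc φ (m * x 0 + m ^ 2 * x (Fin.last n) - m ^ 2 * ∑ k, w k * x k)
      ≤ m * φ (x 0) + m ^ 2 * φ (x (Fin.last n))
          - m * (m * (T * φ (x 0) + (1 - T) * φ (x (Fin.last n)))) :=
        hmean ▸ hconv.map_jensenMercer_le (hx 0) hma (hx (Fin.last n)) hm' hT
    _ ≤ m * φ (x 0) + m ^ 2 * φ (x (Fin.last n)) - m * ∑ k, w k * φ (m * x k) := by
        linarith [mul_le_mul_of_nonneg_left hsum hm'.1]
end

section
/- Let a ≤ b be real numbers, let y₁, …, yₙ ∈ [a,b], and let w₁, …, wₙ be positive weights with ∑_{k=1}^n w_k = 1. If φ is a convex function on [a,b], then φ(a + b − ∑_{k=1}^n w_k y_k) ≤ φ(a) + φ(b) − ∑_{k=1}^n w_k φ(y_k). -/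
/-!
Writing `y = μ a + ν b` with `μ + ν = 1` gives `a + b - y = ν a + μ b`; adding the two convexity
inequalities yields `φ (a + b - y) + φ y ≤ φ a + φ b` for every `y ∈ [a, b]`. Jensen's inequality
applied to the points `a + b - yₖ`, followed by this pointwise bound, gives the result.
-/

open Finset

theorem add_sub_smul_add_smul {R M : Type*} [Semiring R] [AddCommGroup M] [Module R M]
    {μ ν : R} (hμν : μ + ν = 1) (a b : M) : a + b - (μ • a + ν • b) = ν • a + μ • b := by
  have hab : a + b = (μ + ν) • a + (μ + ν) • b := by rw [hμν, one_smul, one_smul]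
  rw [hab, add_smul, add_smul]
  abel

section Segment

variable {𝕜 E : Type*} [Semiring 𝕜] [PartialOrder 𝕜] [AddCommGroup E] [Module 𝕜 E] {a b y : E}

lemma add_sub_mem_segment (hy : y ∈ segment 𝕜 a b) : a + b - y ∈ segment 𝕜 a b := by
  obtain ⟨μ, ν, hμ, hν, hμν, rfl⟩ := hy
  exact ⟨ν, μ, hν, hμ, by rw [add_comm, hμν], (add_sub_smul_add_smul hμν a b).symm⟩

lemma ConvexOn.map_add_sub_add_map_le {β : Type*} [AddCommMonoid β] [PartialOrder β]
    [IsOrderedAddMonoid β] [Module 𝕜 β] {s : Set E} {f : E → β} (hf : ConvexOn 𝕜 s f)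
    (ha : a ∈ s) (hb : b ∈ s) (hy : y ∈ segment 𝕜 a b) : f (a + b - y) + f y ≤ f a + f b := by
  obtain ⟨μ, ν, hμ, hν, hμν, rfl⟩ := hy
  rw [add_sub_smul_add_smul hμν]
  calc f (ν • a + μ • b) + f (μ • a + ν • b)
      ≤ (ν • f a + μ • f b) + (μ • f a + ν • f b) :=
        add_le_add (hf.2 ha hb hν hμ (by rw [add_comm, hμν])) (hf.2 ha hb hμ hν hμν)
    _ = (μ + ν) • f a + (μ + ν) • f b := by rw [add_smul, add_smul]; abel
    _ = f a + f b := by rw [hμν, one_smul, one_smul]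

end Segment

section JensenMercer

variable {𝕜 E β ι : Type*} [Field 𝕜] [LinearOrder 𝕜] [IsStrictOrderedRing 𝕜]
  [AddCommGroup E] [Module 𝕜 E] [AddCommGroup β] [PartialOrder β] [IsOrderedAddMonoid β]
  [Module 𝕜 β] [IsStrictOrderedModule 𝕜 β] {s : Set E} {f : E → β} {a b : E}

theorem ConvexOn.map_add_sub_sum_le (hf : ConvexOn 𝕜 s f) (ha : a ∈ s) (hb : b ∈ s)
    {t : Finset ι} {w : ι → 𝕜} {p : ι → E} (h₀ : ∀ i ∈ t, 0 ≤ w i) (h₁ : ∑ i ∈ t, w i = 1)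
    (hp : ∀ i ∈ t, p i ∈ segment 𝕜 a b) :
    f (a + b - ∑ i ∈ t, w i • p i) ≤ f a + f b - ∑ i ∈ t, w i • f (p i) := by
  have hreflect : a + b - ∑ i ∈ t, w i • p i = ∑ i ∈ t, w i • (a + b - p i) := by
    simp only [smul_sub, sum_sub_distrib, ← sum_smul, h₁, one_smul]
  have hmem : ∀ i ∈ t, a + b - p i ∈ s := fun i hi =>
    hf.1.segment_subset ha hb (add_sub_mem_segment (hp i hi))
  calc f (a + b - ∑ i ∈ t, w i • p i)
      ≤ ∑ i ∈ t, w i • f (a + b - p i) := hreflect ▸ hf.map_sum_le h₀ h₁ hmem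
    _ ≤ ∑ i ∈ t, w i • (f a + f b - f (p i)) := by
        refine sum_le_sum fun i hi => smul_le_smul_of_nonneg_left ?_ (h₀ i hi)
        exact le_sub_iff_add_le.2 (hf.map_add_sub_add_map_le ha hb (hp i hi))
    _ = f a + f b - ∑ i ∈ t, w i • f (p i) := by
        simp only [smul_sub, sum_sub_distrib, ← sum_smul, h₁, one_smul]

end JensenMercer

/-- Discrete Jensen–Mercer inequality, corollary form: if `a ≤ b`, `y₁, …, yₙ ∈ [a,b]`,
the weights `wₖ` are positive and sum to `1`, and `φ` is convex on `[a,b]`, then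
`φ(a + b − ∑ wₖ yₖ) ≤ φ(a) + φ(b) − ∑ wₖ φ(yₖ)`. -/
theorem jensen_mercer_discrete_endpoints
    (a b : ℝ) (hab : a ≤ b)
    (n : ℕ) (y : Fin n → ℝ) (hy : ∀ k, y k ∈ Set.Icc a b)
    (w : Fin n → ℝ) (hw : ∀ k, 0 < w k) (hw1 : ∑ k, w k = 1)
    (φ : ℝ → ℝ) (hφ : ConvexOn ℝ (Set.Icc a b) φ) :
    φ (a + b - ∑ k, w k * y k) ≤ φ a + φ b - ∑ k, w k * φ (y k) :=
  hφ.map_add_sub_sum_le (Set.left_mem_Icc.2 hab) (Set.right_mem_Icc.2 hab)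
    (fun k _ => (hw k).le) hw1 (fun k _ => segment_eq_Icc hab ▸ hy k)
end
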